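/- arXiv:2503.08984 — 3 statements merged into one kernel-verified Lean document; each statement's English description precedes it below -/
import Mathlib

section
/- Let k ≥ 1 be an integer and let H* be a k-regular graph on vertex set [n]. Then the number of k-regular spanning subgraphs H of the complete graph on [n] with |E(H) Δ E(H*)| = 2t is at most binom(kn/2, t) · (2t−1)!!, i.e., at most binom(kn/2, t) · (2t)!/(2^t t!). -/
/-!
Put `A = H* \ H` and `B = H \ H*`. As `H` and `H*` are both `k`-regular, `A` and `B` have the
same degree at every vertex, so each has `t` edges, and `H` is recovered from `A` and `B`. There
are at most `C(kn/2, t)` choices of `A ⊆ E(H*)`. Given `A`, every `B` with the degree sequence of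
`A` is obtained from some perfect matching of the `2t` darts of `A` by joining the tails of matched
darts, so there are at most `(2t - 1)!!` of them. Perfect matchings are counted as bijections
`Fin t × Bool ≃ darts`, each matching being represented by exactly `2 ^ t * t !` of them.
-/

open Finset Function Equiv
open scoped Nat

theorem Equiv.prodShear_inj {α₁ α₂ β₁ β₂ : Type*} [Nonempty β₁] {w w' : α₁ ≃ α₂}
    {g g' : α₁ → β₁ ≃ β₂} : prodShear w g = prodShear w' g' ↔ w = w' ∧ g = g' := by
  refine ⟨fun h => ?_, fun ⟨hw, hg⟩ => hw ▸ hg ▸ rfl⟩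
  have hpt (i : α₁) (b : β₁) : (w i, g i b) = (w' i, g' i b) :=
    congrFun (congrArg DFunLike.coe h) (i, b)
  obtain ⟨b₀⟩ := ‹Nonempty β₁›
  exact ⟨Equiv.ext fun i => congrArg Prod.fst (hpt i b₀),
    funext fun i => Equiv.ext fun b => congrArg Prod.snd (hpt i b)⟩

theorem Set.ncard_le_mul_ncard_of_mapsTo {α β : Type*} {s : Set α} {t : Set β} (hs : s.Finite)
    (ht : t.Finite) {f : α → β} (hf : MapsTo f s t) (n : ℕ)
    (hn : ∀ b ∈ t, {a ∈ s | f a = b}.ncard ≤ n) : s.ncard ≤ n * t.ncard := by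
  classical
  rw [ncard_eq_toFinset_card s hs, ncard_eq_toFinset_card t ht]
  refine Finset.card_le_mul_card_image_of_maps_to
    (fun a ha => by simpa using hf (by simpa using ha)) n fun b hb => ?_
  rw [← ncard_coe_finset]
  convert hn b (by simpa using hb) using 2
  ext a
  simp

namespace SimpleGraph

variable {V : Type*}

section Degrees

variable [Fintype V]

theorem ncard_neighborSet_eq_degree (G : SimpleGraph V) [DecidableRel G.Adj] (v : V) :
    (G.neighborSet v).ncard = G.degree v := by
  rw [← card_neighborSet_eq_degree, ← Nat.card_eq_fintype_card, Nat.card_coe_set_eq]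

theorem sum_ncard_neighborSet (G : SimpleGraph V) :
    ∑ v, (G.neighborSet v).ncard = 2 * G.edgeSet.ncard := by
  classical
  simp only [ncard_neighborSet_eq_degree, sum_degrees_eq_twice_card_edges, ← coe_edgeFinset,
    Set.ncard_coe_finset]

theorem ncard_edgeSet_of_ncard_neighborSet_eq {k : ℕ} {G : SimpleGraph V}
    (hG : ∀ v, (G.neighborSet v).ncard = k) : G.edgeSet.ncard = k * Fintype.card V / 2 := by
  have := G.sum_ncard_neighborSet
  simp only [hG, sum_const, card_univ, smul_eq_mul, mul_comm (Fintype.card V)] at this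
  omega

variable {G H : SimpleGraph V} (hGH : ∀ v, (G.neighborSet v).ncard = (H.neighborSet v).ncard)
include hGH

theorem ncard_edgeSet_eq_of_ncard_neighborSet_eq : G.edgeSet.ncard = H.edgeSet.ncard := by
  have hG := G.sum_ncard_neighborSet
  have hH := H.sum_ncard_neighborSet
  simp only [hGH] at hG
  omega

theorem ncard_neighborSet_sdiff_comm (v : V) :
    ((G \ H).neighborSet v).ncard = ((H \ G).neighborSet v).ncard := by
  rw [neighborSet_sdiff, neighborSet_sdiff,
    ← Set.ncard_eq_ncard_iff_ncard_sdiff_eq_ncard_sdiff]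
  exact hGH v

theorem ncard_edgeSet_sdiff_eq_of_ncard_symmDiff {t : ℕ}
    (hGH' : (symmDiff G.edgeSet H.edgeSet).ncard = 2 * t) : (H \ G).edgeSet.ncard = t := by
  have hcomm := ncard_edgeSet_eq_of_ncard_neighborSet_eq (ncard_neighborSet_sdiff_comm hGH)
  rw [Set.symmDiff_def, Set.ncard_union_eq disjoint_sdiff_sdiff, ← edgeSet_sdiff,
    ← edgeSet_sdiff] at hGH'
  omega

end Degrees

section Pairing

variable {ι X : Type*}

def ofPairing (f : X → V) (σ : ι × Bool ≃ X) : SimpleGraph V :=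
  fromEdgeSet (Set.range fun i => s(f (σ (i, false)), f (σ (i, true))))

theorem ofPairing_prodShear_trans (f : X → V) (σ : ι × Bool ≃ X) (w : Perm ι)
    (g : ι → Perm Bool) : ofPairing f ((prodShear w g).trans σ) = ofPairing f σ := by
  have hpair (i : ι) (g : Perm Bool) :
      s(f (σ (i, g false)), f (σ (i, g true))) = s(f (σ (i, false)), f (σ (i, true))) := by
    have : g false = false ∧ g true = true ∨ g false = true ∧ g true = false := by
      revert g; decide
    rcases this with ⟨h₀, h₁⟩ | ⟨h₀, h₁⟩ <;> simp [h₀, h₁, Sym2.eq_swap]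
  unfold ofPairing
  simp only [trans_apply, prodShear_apply, hpair]
  exact congrArg _ (EquivLike.range_comp (fun i => s(f (σ (i, false)), f (σ (i, true)))) w)

end Pairing

section HalfEdges

variable (G : SimpleGraph V)

theorem exists_dart_edge_eq {e : Sym2 V} (he : e ∈ G.edgeSet) : ∃ d : G.Dart, d.edge = e := by
  induction e using Sym2.ind with
  | _ a b => exact ⟨⟨(a, b), he⟩, rfl⟩

noncomputable def dartOfEdge (e : G.edgeSet) : G.Dart :=
  (G.exists_dart_edge_eq e.2).choose

@[simp]
theorem dartOfEdge_edge (e : G.edgeSet) : (G.dartOfEdge e).edge = e :=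
  (G.exists_dart_edge_eq e.2).choose_spec

theorem bijective_dartOfEdge_or_symm :
    Bijective fun p : G.edgeSet × Bool =>
      if p.2 then (G.dartOfEdge p.1).symm else G.dartOfEdge p.1 := by
  constructor
  · rintro ⟨e, b⟩ ⟨e', b'⟩ h
    have hee' : e = e' := Subtype.ext <| by
      simpa [apply_ite Dart.edge, Dart.edge_symm] using congrArg Dart.edge h
    subst hee'
    cases b <;> cases b' <;> simp_all [(G.dartOfEdge e).symm_ne, (G.dartOfEdge e).symm_ne.symm]
  · intro d
    obtain h | h := (dart_edge_eq_iff d (G.dartOfEdge ⟨d.edge, d.edge_mem⟩)).1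
      (G.dartOfEdge_edge ⟨d.edge, d.edge_mem⟩).symm
    · exact ⟨(⟨d.edge, d.edge_mem⟩, false), h.symm⟩
    · exact ⟨(⟨d.edge, d.edge_mem⟩, true), h.symm⟩

noncomputable def edgeSetProdBoolEquivDart : G.edgeSet × Bool ≃ G.Dart :=
  .ofBijective _ G.bijective_dartOfEdge_or_symm

@[simp]
theorem edgeSetProdBoolEquivDart_false (e : G.edgeSet) :
    G.edgeSetProdBoolEquivDart (e, false) = G.dartOfEdge e := rfl

@[simp]
theorem edgeSetProdBoolEquivDart_true (e : G.edgeSet) :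
    G.edgeSetProdBoolEquivDart (e, true) = (G.dartOfEdge e).symm := rfl

end HalfEdges

section SameDegrees

variable [Fintype V]

theorem exists_ofPairing_eq {G A : SimpleGraph V}
    (hGA : ∀ v, (G.neighborSet v).ncard = (A.neighborSet v).ncard) {t : ℕ}
    (hA : A.edgeSet.ncard = t) :
    ∃ σ : Fin t × Bool ≃ A.Dart, ofPairing (fun d => d.fst) σ = G := by
  classical
  have hfiber (v : V) :
      Fintype.card {d : G.Dart // d.fst = v} = Fintype.card {d : A.Dart // d.fst = v} := by
    rw [Fintype.card_subtype, Fintype.card_subtype, G.dart_fst_fiber_card_eq_degree,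
      A.dart_fst_fiber_card_eq_degree, ← ncard_neighborSet_eq_degree, ← ncard_neighborSet_eq_degree,
      hGA]
  let dartEquiv : G.Dart ≃ A.Dart := .ofFiberEquiv fun v => Fintype.equivOfCardEq (hfiber v)
  have hdartEquiv (d : G.Dart) : (dartEquiv d).fst = d.fst :=
    Equiv.ofFiberEquiv_map (f := fun d : G.Dart => d.fst) (g := fun d : A.Dart => d.fst) _ d
  have hG : Nat.card G.edgeSet = t := by
    rw [Nat.card_coe_set_eq, ncard_edgeSet_eq_of_ncard_neighborSet_eq hGA, hA]
  let u : Fin t ≃ G.edgeSet := (Finite.equivFinOfCardEq hG).symm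
  refine ⟨(u.prodCongr (.refl Bool)).trans (G.edgeSetProdBoolEquivDart.trans dartEquiv), ?_⟩
  have hedge (i : Fin t) :
      s((dartEquiv (G.dartOfEdge (u i))).fst, (dartEquiv (G.dartOfEdge (u i)).symm).fst) =
        u i := by
    rw [hdartEquiv, hdartEquiv, ← G.dartOfEdge_edge (u i)]
    rfl
  simp only [ofPairing, trans_apply, prodCongr_apply, Prod.map, refl_apply,
    edgeSetProdBoolEquivDart_false, edgeSetProdBoolEquivDart_true, hedge]
  rw [show (Set.range fun i => (u i : Sym2 V)) = G.edgeSet from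
    (EquivLike.range_comp _ u).trans Subtype.range_coe, fromEdgeSet_edgeSet]

theorem ncard_setOf_ncard_neighborSet_eq_mul_le (A : SimpleGraph V) {t : ℕ}
    (hA : A.edgeSet.ncard = t) :
    {G : SimpleGraph V | ∀ v, (G.neighborSet v).ncard = (A.neighborSet v).ncard}.ncard *
      (2 ^ t * t !) ≤ (2 * t)! := by
  classical
  set T := {G : SimpleGraph V | ∀ v, (G.neighborSet v).ncard = (A.neighborSet v).ncard}
  choose σ hσ using fun G : T => exists_ofPairing_eq G.2 hA
  let F (x : T × (Perm (Fin t) × (Fin t → Perm Bool))) : Fin t × Bool ≃ A.Dart :=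
    (prodShear x.2.1 x.2.2).trans (σ x.1)
  have hF : Injective F := by
    rintro ⟨G, w, g⟩ ⟨G', w', g'⟩ h
    have hGG' : G = G' := Subtype.ext <| by
      rw [← hσ G, ← hσ G', ← ofPairing_prodShear_trans _ (σ G) w g,
        ← ofPairing_prodShear_trans _ (σ G') w' g']
      exact congrArg _ h
    subst hGG'
    have hshear : prodShear w g = prodShear w' g' :=
      Equiv.ext fun x => (σ G).injective (congrFun (congrArg DFunLike.coe h) x)
    obtain ⟨rfl, rfl⟩ := prodShear_inj.1 hshear
    rfl
  have hcard := Nat.card_le_card_of_injective F hF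
  rw [Nat.card_prod, Nat.card_prod, Nat.card_perm, Nat.card_fun, Nat.card_perm,
    Nat.card_eq_fintype_card (α := _ ≃ _), Fintype.card_equiv (σ ⟨A, fun _ => rfl⟩)] at hcard
  rwa [Nat.card_coe_set_eq, Fintype.card_prod, Fintype.card_fin, Fintype.card_bool, mul_comm t 2,
    Nat.card_eq_fintype_card (α := Bool), Fintype.card_bool, Nat.card_fin, Nat.factorial_two,
    mul_comm (t !)] at hcard

theorem ncard_setOf_sdiff_eq_le (Hstar A : SimpleGraph V) {t : ℕ} (hA : A.edgeSet.ncard = t) :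
    {H : SimpleGraph V |
      (∀ v, (H.neighborSet v).ncard = (Hstar.neighborSet v).ncard) ∧ Hstar \ H = A}.ncard ≤
      (2 * t)! / (2 ^ t * t !) := by
  classical
  rw [Nat.le_div_iff_mul_le (by positivity)]
  refine le_trans (Nat.mul_le_mul_right _ ?_) (ncard_setOf_ncard_neighborSet_eq_mul_le A hA)
  refine Set.ncard_le_ncard_of_injOn (· \ Hstar) ?_ ?_
  · rintro H ⟨hH, rfl⟩ v
    exact ncard_neighborSet_sdiff_comm hH v
  · rintro H ⟨-, hH⟩ H' ⟨-, hH'⟩ (h : H \ Hstar = H' \ Hstar)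
    have hsplit (H : SimpleGraph V) : H = Hstar \ (Hstar \ H) ⊔ H \ Hstar := by
      rw [sdiff_sdiff_right_self, inf_comm, sup_inf_sdiff]
    rw [hsplit H, hsplit H', hH, hH', h]

end SameDegrees

theorem ncard_setOf_le_and_ncard_edgeSet_eq_le_choose [Finite V] (G : SimpleGraph V) (t : ℕ) :
    {A | A ≤ G ∧ A.edgeSet.ncard = t}.ncard ≤ G.edgeSet.ncard.choose t := by
  rw [← Set.ncard_powerset_ncard G.edgeSet.toFinite]
  refine Set.ncard_le_ncard_of_injOn edgeSet ?_ edgeSet_injective.injOn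
  rintro A ⟨hAG, hA⟩
  exact ⟨edgeSet_mono hAG, hA⟩

end SimpleGraph

open SimpleGraph in
theorem stmt2_general (k n t : ℕ) (Hstar : SimpleGraph (Fin n))
    (hreg : ∀ v, (Hstar.neighborSet v).ncard = k) :
    Set.ncard {H : SimpleGraph (Fin n) | (∀ v, (H.neighborSet v).ncard = k) ∧
        (symmDiff H.edgeSet Hstar.edgeSet).ncard = 2 * t} ≤
      Nat.choose (k * n / 2) t * ((2 * t).factorial / (2 ^ t * t.factorial)) := by
  set S := {H : SimpleGraph (Fin n) | (∀ v, (H.neighborSet v).ncard = k) ∧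
    (symmDiff H.edgeSet Hstar.edgeSet).ncard = 2 * t}
  have hdeg {H} (hH : H ∈ S) (v) : (H.neighborSet v).ncard = (Hstar.neighborSet v).ncard :=
    (hH.1 v).trans (hreg v).symm
  have hmaps : Set.MapsTo (Hstar \ ·) S {A | A ≤ Hstar ∧ A.edgeSet.ncard = t} :=
    fun H hH => ⟨sdiff_le, ncard_edgeSet_sdiff_eq_of_ncard_symmDiff (hdeg hH) hH.2⟩
  calc S.ncard
      ≤ (2 * t)! / (2 ^ t * t !) * {A | A ≤ Hstar ∧ A.edgeSet.ncard = t}.ncard :=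
        Set.ncard_le_mul_ncard_of_mapsTo (Set.toFinite _) (Set.toFinite _) hmaps _
          fun A hA => (ncard_setOf_sdiff_eq_le Hstar A hA.2).trans'
            (Set.ncard_le_ncard fun H hH => ⟨hdeg hH.1, hH.2⟩)
    _ ≤ (2 * t)! / (2 ^ t * t !) * Hstar.edgeSet.ncard.choose t :=
        Nat.mul_le_mul_left _ (ncard_setOf_le_and_ncard_edgeSet_eq_le_choose Hstar t)
    _ = (k * n / 2).choose t * ((2 * t)! / (2 ^ t * t !)) := by
        rw [ncard_edgeSet_of_ncard_neighborSet_eq hreg, Fintype.card_fin, mul_comm]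

theorem stmt2 (k n t : ℕ) (hk : 1 ≤ k) (Hstar : SimpleGraph (Fin n))
    (hreg : ∀ v, (Hstar.neighborSet v).ncard = k) :
    Set.ncard {H : SimpleGraph (Fin n) | (∀ v, (H.neighborSet v).ncard = k) ∧
        (symmDiff H.edgeSet Hstar.edgeSet).ncard = 2 * t} ≤
      Nat.choose (k * n / 2) t * ((2 * t).factorial / (2 ^ t * t.factorial)) :=
  stmt2_general k n t Hstar hreg
end

section
/- Consider a Galton–Watson branching process with offspring distribution having mean μ > 1 and variance σ². The survival probability p of the process satisfies p ≥ (μ² − μ)/(μ² − μ + σ²). -/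
/-!
Cauchy–Schwarz against the indicator of `{Z m ≥ 1}` gives the Paley–Zygmund bound
`E[Z m]² ≤ E[Z m ²] · P(Z m ≥ 1)`. The moment recursions keep
`(μ² - μ) E[Z m ²] + σ² E[Z m] = (μ² - μ + σ²) E[Z m]²` invariant, so, as `σ² E[Z m] ≥ 0`,
the ratio `E[Z m]² / E[Z m ²]` is at least `(μ² - μ) / (μ² - μ + σ²)` in every generation.
Extinction is absorbing, so the events `{Z m ≥ 1}` decrease to survival and continuity from
above carries the bound to the limit.
-/

open MeasureTheory

section

variable {α : Type*} [MeasurableSpace α] {μ : Measure α}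

theorem sq_integral_mul_le_integral_sq_mul_integral_sq {f g : α → ℝ} (hf : MemLp f 2 μ)
    (hg : MemLp g 2 μ) :
    (∫ a, f a * g a ∂μ) ^ 2 ≤ (∫ a, f a ^ 2 ∂μ) * ∫ a, g a ^ 2 ∂μ := by
  have hcs := real_inner_mul_inner_self_le (hf.toLp f) (hg.toLp g)
  simp only [L2.inner_def, RCLike.inner_apply, conj_trivial] at hcs
  have hcongr {u u' v v' : α → ℝ} (hu : u =ᵐ[μ] u') (hv : v =ᵐ[μ] v') :
      ∫ a, u a * v a ∂μ = ∫ a, u' a * v' a ∂μ :=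
    integral_congr_ae (hu.mul hv)
  have hF := hf.coeFn_toLp
  have hG := hg.coeFn_toLp
  rw [hcongr hG hF, hcongr hF hF, hcongr hG hG] at hcs
  simpa only [sq, mul_comm (g _)] using hcs

theorem sq_integral_le_integral_sq_mul_measureReal [IsFiniteMeasure μ] {X : α → ℝ} {s : Set α}
    (hs : MeasurableSet s) (hX : MemLp X 2 μ) (hXs : ∀ a ∉ s, X a = 0) :
    (∫ a, X a ∂μ) ^ 2 ≤ (∫ a, X a ^ 2 ∂μ) * μ.real s := by
  have hX_eq : ∀ a, X a = X a * s.indicator (fun _ => (1 : ℝ)) a := by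
    intro a
    by_cases ha : a ∈ s <;> simp [ha, hXs]
  have hind : ∀ a, s.indicator (fun _ => (1 : ℝ)) a ^ 2 = s.indicator (fun _ => (1 : ℝ)) a := by
    intro a
    by_cases ha : a ∈ s <;> simp [ha]
  have hcs := sq_integral_mul_le_integral_sq_mul_integral_sq hX
    ((memLp_const (1 : ℝ)).indicator hs)
  simp only [← hX_eq, hind] at hcs
  rwa [integral_indicator_const _ hs, smul_eq_mul, mul_one] at hcs

theorem le_measureReal_iInter_of_antitone [IsFiniteMeasure μ] {A : ℕ → Set α}
    (hA : Antitone A) (hmeas : ∀ n, MeasurableSet (A n)) {c : ℝ} (hc : ∀ n, c ≤ μ.real (A n)) :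
    c ≤ μ.real (⋂ n, A n) := by
  rw [measureReal_def, hA.measure_iInter (fun n => (hmeas n).nullMeasurableSet)
    ⟨0, measure_ne_top _ _⟩, ENNReal.toReal_iInf (fun n => measure_ne_top _ _)]
  exact le_ciInf hc

end

-- Invariant because `(μ² - μ) + μ = μ²`.
theorem moment_recurrence_invariant {R : Type*} [CommRing R] {μ σ2 : R} {a b : ℕ → R}
    (ha0 : a 0 = 1) (hb0 : b 0 = 1) (ha : ∀ m, a (m + 1) = μ * a m)
    (hb : ∀ m, b (m + 1) = μ ^ 2 * b m + σ2 * a m) (m : ℕ) :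
    (μ ^ 2 - μ) * b m + σ2 * a m = (μ ^ 2 - μ + σ2) * a m ^ 2 := by
  induction m with
  | zero => rw [ha0, hb0]; ring
  | succ m ih => rw [ha, hb]; linear_combination μ ^ 2 * ih

theorem div_add_le_of_sq_le_mul {x b P d s : ℝ} (hx : 0 < x) (hd : 0 < d) (hs : 0 ≤ s)
    (hP : 0 ≤ P) (hxb : x ^ 2 ≤ b * P) (hb : d * b + s * x = (d + s) * x ^ 2) :
    d / (d + s) ≤ P := by
  rw [div_le_iff₀ (by positivity)]
  have hdb : d * b ≤ (d + s) * x ^ 2 := by nlinarith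
  have hx2 : d * x ^ 2 ≤ P * (d + s) * x ^ 2 := by
    nlinarith [mul_le_mul_of_nonneg_right hdb hP, mul_le_mul_of_nonneg_left hxb hd.le]
  exact le_of_mul_le_mul_right hx2 (by positivity)

theorem stmt3 {Ω : Type*} [MeasurableSpace Ω] (ℙ : Measure Ω) [IsProbabilityMeasure ℙ]
    (Z : ℕ → Ω → ℕ) (μ σ2 : ℝ) (hμ : 1 < μ) (hσ2 : 0 ≤ σ2)
    (hmeas : ∀ m, Measurable (Z m))
    (h0 : ∀ ω, Z 0 ω = 1)
    (hdead : ∀ ω m, Z m ω = 0 → Z (m + 1) ω = 0)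
    (hint : ∀ m, Integrable (fun ω => (Z m ω : ℝ) ^ 2) ℙ)
    (hmean : ∀ m, ∫ ω, (Z (m + 1) ω : ℝ) ∂ℙ = μ * ∫ ω, (Z m ω : ℝ) ∂ℙ)
    (hsecond : ∀ m, ∫ ω, (Z (m + 1) ω : ℝ) ^ 2 ∂ℙ =
        μ ^ 2 * ∫ ω, (Z m ω : ℝ) ^ 2 ∂ℙ + σ2 * ∫ ω, (Z m ω : ℝ) ∂ℙ) :
    (μ ^ 2 - μ) / (μ ^ 2 - μ + σ2) ≤ (ℙ {ω | ∀ m, 1 ≤ Z m ω}).toReal := by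
  have hfirst (m : ℕ) : ∫ ω, (Z m ω : ℝ) ∂ℙ = μ ^ m := by
    induction m with
    | zero => simp [h0]
    | succ m ih => rw [hmean, ih, pow_succ']
  have hidentity := moment_recurrence_invariant (a := fun m => ∫ ω, (Z m ω : ℝ) ∂ℙ)
    (b := fun m => ∫ ω, (Z m ω : ℝ) ^ 2 ∂ℙ) (by simp [h0]) (by simp [h0]) hmean hsecond
  have hA_meas (m : ℕ) : MeasurableSet {ω | 1 ≤ Z m ω} :=
    measurableSet_le measurable_const (hmeas m)
  have hA_anti : Antitone fun m => {ω | 1 ≤ Z m ω} :=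
    antitone_nat_of_succ_le fun m ω hω =>
      Nat.one_le_iff_ne_zero.2 fun hm => by simp [hdead ω m hm] at hω
  have hgeneration (m : ℕ) : (μ ^ 2 - μ) / (μ ^ 2 - μ + σ2) ≤ ℙ.real {ω | 1 ≤ Z m ω} := by
    have hZ_meas : Measurable fun ω => (Z m ω : ℝ) := by fun_prop
    have hZ_memLp : MemLp (fun ω => (Z m ω : ℝ)) 2 ℙ :=
      (memLp_two_iff_integrable_sq hZ_meas.aestronglyMeasurable).2 (hint m)
    have hPZ := sq_integral_le_integral_sq_mul_measureReal (hA_meas m) hZ_memLp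
      (fun ω hω => by simpa using hω)
    refine div_add_le_of_sq_le_mul ?_ (by nlinarith) hσ2 measureReal_nonneg hPZ (hidentity m)
    rw [hfirst]
    positivity
  simpa only [Set.iInter_ofPred, measureReal_def] using
    le_measureReal_iInter_of_antitone hA_anti hA_meas hgeneration
end

section
/- Let k, n be positive integers, 0 < p < 1, λ = np, and H* a fixed k-regular graph on [n]. For 0 ≤ ℓ ≤ kn/2, the expected number of k-factors H of the complete graph with |E(H) ∩ E(H*)| = ℓ and all edges of H \ H* present in an Erdős–Rényi graph G(n, p) independent of H* (with planted edges always present) is at most (nkp)^{kn/2 − ℓ}. -/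
open Finset

lemma sym2_filter_card {n : ℕ} (e : Sym2 (Fin n)) (he : ¬ e.IsDiag) :
    (Finset.univ.filter (fun v => v ∈ e)).card = 2 := by
  induction e with
  | _ a b =>
    rw [Sym2.isDiag_iff_proj_eq] at he
    have : Finset.univ.filter (fun v => v ∈ (s(a,b) : Sym2 (Fin n))) = {a, b} := by
      ext v; simp [Sym2.mem_iff]
    rw [this, card_insert_of_notMem (by simpa using he), card_singleton]

lemma sum_inc {n : ℕ} (D : Finset (Sym2 (Fin n))) (hD : ∀ e ∈ D, ¬ e.IsDiag) :
    ∑ v, (D.filter (fun e => v ∈ e)).card = 2 * D.card := by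
  have : ∀ v : Fin n, (D.filter (fun e => v ∈ e)).card = ∑ e ∈ D, if v ∈ e then 1 else 0 :=
    fun v => card_filter _ _
  simp_rw [this]
  rw [Finset.sum_comm]
  have : ∀ e ∈ D, (∑ v : Fin n, if v ∈ e then 1 else 0) = 2 := by
    intro e he
    rw [← card_filter]
    exact sym2_filter_card e (hD e he)
  rw [Finset.sum_congr rfl this, Finset.sum_const, smul_eq_mul, mul_comm]

lemma degCount {n : ℕ} : ∀ (t : ℕ) (d : Fin n → ℕ), (∑ v, d v = 2 * t) →
    (Finset.univ.filter (fun A : Finset (Sym2 (Fin n)) =>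
       (∀ e ∈ A, ¬ e.IsDiag) ∧ ∀ v, (A.filter (fun e => v ∈ e)).card = d v)).card
      ≤ ∏ i ∈ Finset.range t, (2 * i + 1) := by
  intro t
  induction t with
  | zero =>
    intro d hd
    simp only [Nat.mul_zero, Finset.sum_eq_zero_iff, mem_univ, forall_true_left] at hd
    rw [Finset.prod_range_zero]
    have : (Finset.univ.filter (fun A : Finset (Sym2 (Fin n)) =>
       (∀ e ∈ A, ¬ e.IsDiag) ∧ ∀ v, (A.filter (fun e => v ∈ e)).card = d v)) ⊆ {∅} := by
      intro A hA
      simp only [mem_filter, mem_univ, true_and] at hA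
      simp only [mem_singleton]
      by_contra hne
      obtain ⟨e, he⟩ := Finset.nonempty_iff_ne_empty.2 hne
      have hv : ∃ v : Fin n, v ∈ e := by
        obtain ⟨a, b⟩ := e; exact ⟨a, Sym2.mem_mk_left a b⟩
      obtain ⟨v, hv⟩ := hv
      have hmem : e ∈ (A.filter (fun e => v ∈ e)) := mem_filter.2 ⟨he, hv⟩
      have := hA.2 v
      rw [hd v] at this
      rw [Finset.card_eq_zero] at this
      rw [this] at hmem
      exact absurd hmem (Finset.notMem_empty e)
    calc _ ≤ ({∅} : Finset (Finset (Sym2 (Fin n)))).card := card_le_card this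
    _ = 1 := card_singleton _
  | succ t ih =>
    intro d hd
    have hpos : ∃ v₀, 1 ≤ d v₀ := by
      by_contra h
      push_neg at h
      have : ∑ v, d v = 0 := Finset.sum_eq_zero fun v _ => by have := h v; omega
      omega
    obtain ⟨v₀, hv₀⟩ := hpos
    set U := Finset.univ.filter (fun u : Fin n => u ≠ v₀ ∧ 1 ≤ d u) with hU
    have hsub : (Finset.univ.filter (fun A : Finset (Sym2 (Fin n)) =>
       (∀ e ∈ A, ¬ e.IsDiag) ∧ ∀ v, (A.filter (fun e => v ∈ e)).card = d v)) ⊆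
        U.biUnion (fun u => ((Finset.univ.filter (fun A : Finset (Sym2 (Fin n)) =>
          (∀ e ∈ A, ¬ e.IsDiag) ∧ ∀ v, (A.filter (fun e => v ∈ e)).card =
            d v - (if v ∈ (s(v₀,u) : Sym2 (Fin n)) then 1 else 0))).image
              (insert (s(v₀,u) : Sym2 (Fin n))))) := by
      intro A hA
      simp only [mem_filter, mem_univ, true_and] at hA
      obtain ⟨hdiag, hdeg⟩ := hA
      have hc : 0 < (A.filter (fun e => v₀ ∈ e)).card := by rw [hdeg v₀]; omega
      obtain ⟨e, he⟩ := Finset.card_pos.mp hc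
      rw [mem_filter] at he
      obtain ⟨heA, hev⟩ := he
      obtain ⟨u, rfl⟩ := Sym2.mem_iff_exists.mp hev
      have hne : u ≠ v₀ := by
        intro h
        exact hdiag _ heA (by simp [h])
      have hu1 : 1 ≤ d u := by
        rw [← hdeg u]
        exact Finset.card_pos.mpr ⟨s(v₀,u), mem_filter.2 ⟨heA, Sym2.mem_mk_right _ _⟩⟩
      rw [mem_biUnion]
      refine ⟨u, by simp [hU, hne, hu1], ?_⟩
      rw [mem_image]
      refine ⟨A.erase (s(v₀,u)), ?_, Finset.insert_erase heA⟩
      simp only [mem_filter, mem_univ, true_and]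
      refine ⟨fun e he => hdiag e (Finset.mem_of_mem_erase he), fun v => ?_⟩
      rw [Finset.filter_erase]
      by_cases hvm : v ∈ (s(v₀,u) : Sym2 (Fin n))
      · rw [Finset.card_erase_of_mem (mem_filter.2 ⟨heA, hvm⟩), hdeg v, if_pos hvm]
      · have hnm : s(v₀,u) ∉ A.filter (fun e => v ∈ e) :=
          fun hmem => hvm (mem_filter.mp hmem).2
        rw [Finset.erase_eq_of_notMem hnm, hdeg v, if_neg hvm]
        omega
    have hcard := card_le_card hsub
    have hstep : ∀ u ∈ U, ((Finset.univ.filter (fun A : Finset (Sym2 (Fin n)) =>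
          (∀ e ∈ A, ¬ e.IsDiag) ∧ ∀ v, (A.filter (fun e => v ∈ e)).card =
            d v - (if v ∈ (s(v₀,u) : Sym2 (Fin n)) then 1 else 0))).image
              (insert (s(v₀,u) : Sym2 (Fin n)))).card ≤ ∏ i ∈ Finset.range t, (2 * i + 1) := by
      intro u hu
      rw [hU, mem_filter] at hu
      obtain ⟨-, hne, hu1⟩ := hu
      refine le_trans (Finset.card_image_le) (ih _ ?_)
      have hkey : ∀ v, (d v - (if v ∈ (s(v₀,u) : Sym2 (Fin n)) then 1 else 0)) +
          (if v ∈ (s(v₀,u) : Sym2 (Fin n)) then 1 else 0) = d v := by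
        intro v
        by_cases hvm : v ∈ (s(v₀,u) : Sym2 (Fin n))
        · rw [if_pos hvm]
          rcases Sym2.mem_iff.mp hvm with h | h
          · subst h; omega
          · subst h; omega
        · simp [hvm]
      have hsum2 : ∑ v, (if v ∈ (s(v₀,u) : Sym2 (Fin n)) then 1 else 0) = 2 := by
        rw [← Finset.card_filter]
        exact sym2_filter_card _ (by simp [Sym2.mk_isDiag_iff]; exact fun h => hne h.symm)
      have := Finset.sum_congr rfl (fun v (_ : v ∈ Finset.univ) => hkey v)
      rw [Finset.sum_add_distrib, hsum2, hd] at this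
      omega
    have hUcard : U.card ≤ 2 * t + 1 := by
      have h1 : U.card ≤ ∑ u ∈ U, d u := by
        calc U.card = ∑ u ∈ U, 1 := Finset.card_eq_sum_ones U
        _ ≤ ∑ u ∈ U, d u := Finset.sum_le_sum (fun u hu => (mem_filter.mp hu).2.2)
      have h2 : ∑ u ∈ U, d u ≤ ∑ u ∈ Finset.univ.erase v₀, d u :=
        Finset.sum_le_sum_of_subset (fun u hu => Finset.mem_erase.2
          ⟨(mem_filter.mp hu).2.1, mem_univ u⟩)
      have h3 : ∑ u ∈ Finset.univ.erase v₀, d u + d v₀ = ∑ v, d v :=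
        Finset.sum_erase_add _ _ (mem_univ v₀)
      omega
    calc _ ≤ _ := hcard
    _ ≤ ∑ u ∈ U, ((Finset.univ.filter (fun A : Finset (Sym2 (Fin n)) =>
          (∀ e ∈ A, ¬ e.IsDiag) ∧ ∀ v, (A.filter (fun e => v ∈ e)).card =
            d v - (if v ∈ (s(v₀,u) : Sym2 (Fin n)) then 1 else 0))).image
              (insert (s(v₀,u) : Sym2 (Fin n)))).card := Finset.card_biUnion_le
    _ ≤ ∑ _u ∈ U, ∏ i ∈ Finset.range t, (2 * i + 1) := Finset.sum_le_sum hstep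
    _ = U.card * ∏ i ∈ Finset.range t, (2 * i + 1) := by rw [Finset.sum_const, smul_eq_mul]
    _ ≤ (2 * t + 1) * ∏ i ∈ Finset.range t, (2 * i + 1) :=
        Nat.mul_le_mul_right _ hUcard
    _ = ∏ i ∈ Finset.range (t+1), (2 * i + 1) := by rw [Finset.prod_range_succ]; ring

theorem stmt12 (k n ℓ : ℕ) (hk : 0 < k) (hn : 0 < n) (p lam : ℝ) (hp0 : 0 < p)
    (hp1 : p < 1) (hlam : lam = n * p) (hℓ : ℓ ≤ k * n / 2)
    (Hstar : SimpleGraph (Fin n)) (hreg : ∀ v, (Hstar.neighborSet v).ncard = k) :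
    (Set.ncard {H : SimpleGraph (Fin n) | (∀ v, (H.neighborSet v).ncard = k) ∧
        (H.edgeSet ∩ Hstar.edgeSet).ncard = ℓ} : ℝ) * p ^ (k * n / 2 - ℓ) ≤
      ((n : ℝ) * k * p) ^ (k * n / 2 - ℓ) := by
  classical
  set m := k * n / 2 with hm
  set t := m - ℓ with ht
  set S := {H : SimpleGraph (Fin n) | (∀ v, (H.neighborSet v).ncard = k) ∧
        (H.edgeSet ∩ Hstar.edgeSet).ncard = ℓ} with hS
  have hdeg : ∀ (G : SimpleGraph (Fin n)), (∀ v, (G.neighborSet v).ncard = k) →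
      ∀ v, G.degree v = k := by
    intro G hG v
    rw [← hG v, SimpleGraph.degree, SimpleGraph.neighborFinset_def,
      ← Set.ncard_eq_toFinset_card']
  have hhs : ∀ (G : SimpleGraph (Fin n)), (∀ v, (G.neighborSet v).ncard = k) →
      G.edgeFinset.card = m := by
    intro G hG
    have h2 := SimpleGraph.sum_degrees_eq_twice_card_edges G
    have h3 : ∑ v, G.degree v = n * k := by
      rw [Finset.sum_congr rfl (fun v _ => hdeg G hG v), Finset.sum_const, card_univ,
        Fintype.card_fin, smul_eq_mul]
    have hkn : k * n = 2 * G.edgeFinset.card := by rw [mul_comm k n, ← h3]; exact h2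
    rw [hm, hkn]
    omega
  have hinc : ∀ (G : SimpleGraph (Fin n)) (v : Fin n),
      (G.edgeFinset.filter (fun e => v ∈ e)).card = G.degree v := by
    intro G v
    rw [← SimpleGraph.incidenceFinset_eq_filter, SimpleGraph.card_incidenceFinset_eq_degree]
  have hSfin : S.Finite := Set.toFinite S
  have hEcard : Hstar.edgeFinset.card = m := hhs Hstar hreg
  have key : hSfin.toFinset.card ≤ m.choose t * ∏ i ∈ Finset.range t, (2 * i + 1) := by
    set T := (Hstar.edgeFinset.powersetCard t).sigma
        (fun D => (Finset.univ.filter (fun A : Finset (Sym2 (Fin n)) =>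
          (∀ e ∈ A, ¬ e.IsDiag) ∧ ∀ v, (A.filter (fun e => v ∈ e)).card =
            ((D.filter (fun e => v ∈ e)).card)))) with hT
    have hmapsto : ∀ H ∈ hSfin.toFinset,
        (⟨Hstar.edgeFinset \ H.edgeFinset, H.edgeFinset \ Hstar.edgeFinset⟩ :
          Σ _ : Finset (Sym2 (Fin n)), Finset (Sym2 (Fin n))) ∈ T := by
      intro H hH
      rw [Set.Finite.mem_toFinset, hS, Set.mem_setOf_eq] at hH
      obtain ⟨hregH, hℓH⟩ := hH
      have hcoe : H.edgeSet ∩ Hstar.edgeSet = ↑(H.edgeFinset ∩ Hstar.edgeFinset) := by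
        ext e
        simp [SimpleGraph.mem_edgeFinset]
      rw [hcoe, Set.ncard_coe_finset] at hℓH
      have hHcard : H.edgeFinset.card = m := hhs H hregH
      have hintcomm : (Hstar.edgeFinset ∩ H.edgeFinset).card = ℓ := by
        rw [inter_comm]; exact hℓH
      have hDcard : (Hstar.edgeFinset \ H.edgeFinset).card = t := by
        have := Finset.card_sdiff_add_card_inter Hstar.edgeFinset H.edgeFinset
        omega
      rw [hT, Finset.mem_sigma]
      constructor
      · exact Finset.mem_powersetCard.2 ⟨Finset.sdiff_subset, hDcard⟩
      · dsimp only
        rw [mem_filter]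
        refine ⟨mem_univ _, fun e he => SimpleGraph.not_isDiag_of_mem_edgeFinset
          (Finset.mem_sdiff.mp he).1, fun v => ?_⟩
        have hdisj1 : Disjoint ((H.edgeFinset \ Hstar.edgeFinset).filter (fun e => v ∈ e))
            ((H.edgeFinset ∩ Hstar.edgeFinset).filter (fun e => v ∈ e)) :=
          Finset.disjoint_filter_filter (Finset.disjoint_sdiff_inter _ _)
        have h1 : ((H.edgeFinset \ Hstar.edgeFinset).filter (fun e => v ∈ e)).card +
            ((H.edgeFinset ∩ Hstar.edgeFinset).filter (fun e => v ∈ e)).card = k := by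
          rw [← Finset.card_union_of_disjoint hdisj1, ← Finset.filter_union,
            Finset.sdiff_union_inter, hinc, hdeg H hregH]
        have hdisj2 : Disjoint ((Hstar.edgeFinset \ H.edgeFinset).filter (fun e => v ∈ e))
            ((Hstar.edgeFinset ∩ H.edgeFinset).filter (fun e => v ∈ e)) :=
          Finset.disjoint_filter_filter (Finset.disjoint_sdiff_inter _ _)
        have h2 : ((Hstar.edgeFinset \ H.edgeFinset).filter (fun e => v ∈ e)).card +
            ((Hstar.edgeFinset ∩ H.edgeFinset).filter (fun e => v ∈ e)).card = k := by
          rw [← Finset.card_union_of_disjoint hdisj2, ← Finset.filter_union,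
            Finset.sdiff_union_inter, hinc, hdeg Hstar hreg]
        have h3 : (H.edgeFinset ∩ Hstar.edgeFinset).filter (fun e => v ∈ e) =
            (Hstar.edgeFinset ∩ H.edgeFinset).filter (fun e => v ∈ e) := by
          rw [inter_comm]
        rw [h3] at h1
        omega
    have hinj : Set.InjOn (fun H : SimpleGraph (Fin n) =>
        (⟨Hstar.edgeFinset \ H.edgeFinset, H.edgeFinset \ Hstar.edgeFinset⟩ :
          Σ _ : Finset (Sym2 (Fin n)), Finset (Sym2 (Fin n)))) ↑hSfin.toFinset := by
      intro H1 h1 H2 h2 heq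
      simp only [Sigma.mk.inj_iff, heq_eq_eq] at heq
      obtain ⟨e1, e2⟩ := heq
      have hid : ∀ G : SimpleGraph (Fin n), G.edgeFinset =
          (Hstar.edgeFinset \ (Hstar.edgeFinset \ G.edgeFinset)) ∪
            (G.edgeFinset \ Hstar.edgeFinset) := by
        intro G
        ext e
        simp only [Finset.mem_union, Finset.mem_sdiff]
        tauto
      have : H1.edgeFinset = H2.edgeFinset := by
        rw [hid H1, hid H2, e1, e2]
      exact SimpleGraph.edgeFinset_inj.mp this
    calc hSfin.toFinset.card ≤ T.card := Finset.card_le_card_of_injOn _ hmapsto hinj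
    _ = ∑ D ∈ Hstar.edgeFinset.powersetCard t, (Finset.univ.filter
          (fun A : Finset (Sym2 (Fin n)) =>
          (∀ e ∈ A, ¬ e.IsDiag) ∧ ∀ v, (A.filter (fun e => v ∈ e)).card =
            ((D.filter (fun e => v ∈ e)).card))).card := Finset.card_sigma _ _
    _ ≤ ∑ _D ∈ Hstar.edgeFinset.powersetCard t, ∏ i ∈ Finset.range t, (2 * i + 1) := by
        refine Finset.sum_le_sum (fun D hD => ?_)
        rw [Finset.mem_powersetCard] at hD
        refine degCount t _ ?_
        rw [sum_inc D (fun e he => SimpleGraph.not_isDiag_of_mem_edgeFinset (hD.1 he)), hD.2]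
    _ = m.choose t * ∏ i ∈ Finset.range t, (2 * i + 1) := by
        rw [Finset.sum_const, smul_eq_mul, Finset.card_powersetCard, hEcard]
  have prodbound : ∏ i ∈ Finset.range t, (2 * i + 1) ≤ 2 ^ t * t.factorial := by
    calc ∏ i ∈ Finset.range t, (2 * i + 1) ≤ ∏ i ∈ Finset.range t, (2 * (i + 1)) :=
        Finset.prod_le_prod' (fun i _ => by omega)
    _ = (∏ _i ∈ Finset.range t, 2) * ∏ i ∈ Finset.range t, (i + 1) := by
        rw [← Finset.prod_mul_distrib]
    _ = 2 ^ t * t.factorial := by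
        rw [Finset.prod_const, Finset.card_range, Finset.prod_range_add_one_eq_factorial]
  have hN : S.ncard ≤ (k * n) ^ t := by
    calc S.ncard = hSfin.toFinset.card := Set.ncard_eq_toFinset_card S hSfin
    _ ≤ m.choose t * ∏ i ∈ Finset.range t, (2 * i + 1) := key
    _ ≤ m.choose t * (2 ^ t * t.factorial) := Nat.mul_le_mul_left _ prodbound
    _ = 2 ^ t * (t.factorial * m.choose t) := by ring
    _ = 2 ^ t * m.descFactorial t := by rw [Nat.descFactorial_eq_factorial_mul_choose]
    _ ≤ 2 ^ t * m ^ t := Nat.mul_le_mul_left _ (Nat.descFactorial_le_pow m t)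
    _ = (2 * m) ^ t := (mul_pow 2 m t).symm
    _ ≤ (k * n) ^ t := Nat.pow_le_pow_left (by
        rw [hm, mul_comm 2 (k * n / 2)]
        exact Nat.div_mul_le_self (k * n) 2) t
  have hpt : (0:ℝ) ≤ p ^ t := le_of_lt (pow_pos hp0 t)
  have hcast : (S.ncard : ℝ) ≤ (((k * n : ℕ) : ℝ)) ^ t := by
    rw [← Nat.cast_pow]
    exact_mod_cast hN
  have hrw : ((n : ℝ) * k * p) ^ t = (((k * n : ℕ) : ℝ)) ^ t * p ^ t := by
    push_cast
    ring
  rw [hrw]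
  exact mul_le_mul_of_nonneg_right hcast hpt
end
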